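/- Let U be a submodular universe, k ∈ ℕ, and 𝒫 a set of regular profiles of S_k. Then there exists a nested set N ⊆ S_k such that any two distinct profiles in 𝒫 are efficiently distinguished by some separation in N. -/

import Mathlib

/-!
Take a maximal nested set `N` of separations each of which efficiently distinguishes two
profiles of `𝔓`. Given `P ≠ Q` in `𝔓`, choose an efficient `P`–`Q` distinguisher `s` crossing as
few elements of `N` as possible. If `s` crossed some `t ∈ N`, submodularity and the efficiency
of `t` would yield a corner of `s` and `t` of order at most `|s|` that still distinguishes `P`
and `Q`; by the fish lemma this corner is nested with `t` and with everything nested with both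
`s` and `t`, so it crosses fewer elements of `N`. Hence `s` is nested with all of `N`, and lies
in `N` by maximality.
-/

namespace SepDemo

/-- A universe of separations: a finite lattice with an order-reversing involution. -/
structure SepUniverse (U : Type*) [Lattice U] [Fintype U] where
  inv : U → U
  inv_inv : ∀ s, inv (inv s) = s
  le_iff : ∀ r s : U, r ≤ s ↔ inv s ≤ inv r

/-- A submodular universe: a universe with a submodular order function. -/
structure SubmodUniverse (U : Type*) [Lattice U] [Fintype U] extends SepUniverse U where
  ord : U → ℕ
  ord_inv : ∀ s, ord (inv s) = ord s
  submod : ∀ s t : U, ord (s ⊔ t) + ord (s ⊓ t) ≤ ord s + ord t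

variable {U : Type*} [Lattice U] [Fintype U]

/-- A separation system inside a universe: a subset closed under the involution. -/
def SepSystem (𝒰 : SepUniverse U) (S : Set U) : Prop :=
  ∀ s ∈ S, 𝒰.inv s ∈ S

/-- An orientation of `S`: contains, for each `s ∈ S`, exactly one of `s`, `s*`
(just `s` itself if `s` is degenerate). -/
def IsOrientation (𝒰 : SepUniverse U) (S O : Set U) : Prop :=
  O ⊆ S ∧ ∀ s ∈ S, (s ∈ O ∨ 𝒰.inv s ∈ O) ∧ (s ∈ O → 𝒰.inv s ∈ O → s = 𝒰.inv s)

/-- Consistency: no `r, s ∈ O` with `{r,r*} ≠ {s,s*}` and `r* ≤ s`. -/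
def Consistent (𝒰 : SepUniverse U) (O : Set U) : Prop :=
  ∀ r ∈ O, ∀ s ∈ O, ({r, 𝒰.inv r} : Set U) ≠ ({s, 𝒰.inv s} : Set U) → ¬ 𝒰.inv r ≤ s

/-- A profile of `S`: a consistent orientation satisfying the profile property. -/
def IsProfile (𝒰 : SepUniverse U) (S P : Set U) : Prop :=
  IsOrientation 𝒰 S P ∧ Consistent 𝒰 P ∧ ∀ r ∈ P, ∀ s ∈ P, 𝒰.inv (r ⊔ s) ∉ P

/-- Regular: contains no cosmall separation. -/
def Regular (𝒰 : SepUniverse U) (P : Set U) : Prop :=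
  ∀ s ∈ P, ¬ 𝒰.inv s ≤ s

/-- Two separations are nested. -/
def Nested (𝒰 : SepUniverse U) (r s : U) : Prop :=
  r ≤ s ∨ r ≤ 𝒰.inv s ∨ 𝒰.inv r ≤ s ∨ 𝒰.inv r ≤ 𝒰.inv s

/-- A set of separations is nested if its members are pairwise nested. -/
def NestedSet (𝒰 : SepUniverse U) (N : Set U) : Prop :=
  ∀ r ∈ N, ∀ s ∈ N, Nested 𝒰 r s

/-- `s` distinguishes the orientations `O₁` and `O₂`. -/
def Distinguishes (𝒰 : SepUniverse U) (s : U) (O₁ O₂ : Set U) : Prop :=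
  (s ∈ O₁ ∧ 𝒰.inv s ∈ O₂) ∨ (𝒰.inv s ∈ O₁ ∧ s ∈ O₂)

/-- Two orientations are distinguishable. -/
def Distinguishable (𝒰 : SepUniverse U) (P Q : Set U) : Prop :=
  ∃ s : U, Distinguishes 𝒰 s P Q

/-- Structural submodularity of a separation system. -/
def StructSubmodular (S : Set U) : Prop :=
  ∀ s ∈ S, ∀ t ∈ S, s ⊔ t ∈ S ∨ s ⊓ t ∈ S

/-- `s` is trivial in `S`. -/
def IsTrivialIn (𝒰 : SepUniverse U) (S : Set U) (s : U) : Prop :=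
  ∃ r ∈ S, ({r, 𝒰.inv r} : Set U) ≠ ({s, 𝒰.inv s} : Set U) ∧ s ≤ r ∧ s ≤ 𝒰.inv r

/-- A star of separations. -/
def IsStar (𝒰 : SepUniverse U) (σ : Set U) : Prop :=
  ∀ r ∈ σ, ∀ s ∈ σ, r ≠ s → r ≤ 𝒰.inv s

/-- The shift `σ_x^{s₀}` of a star `σ` at `x ∈ σ` to `s₀`. -/
def shiftStar (𝒰 : SepUniverse U) (σ : Set U) (x s₀ : U) : Set U :=
  insert (x ⊔ s₀) ((fun y => y ⊓ 𝒰.inv s₀) '' (σ \ {x}))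

/-- `s₀` emulates `r` in `S`. -/
def Emulates (𝒰 : SepUniverse U) (S : Set U) (s₀ r : U) : Prop :=
  r ≤ s₀ ∧ ∀ t ∈ S, t ≠ 𝒰.inv r → r ≤ t → t ⊔ s₀ ∈ S

/-- `s₀` emulates `r` in `S` for a set `F` of stars. -/
def EmulatesFor (𝒰 : SepUniverse U) (S : Set U) (F : Set (Set U)) (s₀ r : U) : Prop :=
  Emulates 𝒰 S s₀ r ∧
    ∀ σ ∈ F, 𝒰.inv r ∉ σ → ∀ x ∈ σ, r ≤ x → shiftStar 𝒰 σ x s₀ ∈ F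

/-- `F` forces `s`. -/
def Forces (𝒰 : SepUniverse U) (F : Set (Set U)) (s : U) : Prop :=
  ({𝒰.inv s} : Set U) ∈ F

/-- `S` is `F`-separable. -/
def FSeparable (𝒰 : SepUniverse U) (S : Set U) (F : Set (Set U)) : Prop :=
  ∀ r₁ ∈ S, ∀ r₂ ∈ S,
    ¬ IsTrivialIn 𝒰 S r₁ → ¬ IsTrivialIn 𝒰 S r₂ →
    r₁ ≠ 𝒰.inv r₁ → r₂ ≠ 𝒰.inv r₂ →
    ¬ Forces 𝒰 F r₁ → ¬ Forces 𝒰 F r₂ →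
    r₁ ≤ 𝒰.inv r₂ →
    ∃ s₀ ∈ S, r₁ ≤ s₀ ∧ s₀ ≤ 𝒰.inv r₂ ∧
      EmulatesFor 𝒰 S F s₀ r₁ ∧ EmulatesFor 𝒰 S F (𝒰.inv s₀) r₂

/-- `r` is `F`-critical. -/
def FCritical (𝒰 : SepUniverse U) (F : Set (Set U)) (r : U) : Prop :=
  (∃ σ ∈ F, r ∈ σ) ∧
    ¬ ∃ σ' ∈ F, σ' ∩ ({r, 𝒰.inv r} : Set U) = ({𝒰.inv r} : Set U)

/-- `S` is critically `F`-separable. -/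
def CritFSeparable (𝒰 : SepUniverse U) (S : Set U) (F : Set (Set U)) : Prop :=
  ∀ r₁ ∈ S, ∀ r₂ ∈ S, FCritical 𝒰 F r₁ → FCritical 𝒰 F r₂ → r₁ ≤ 𝒰.inv r₂ →
    ∃ s₀ ∈ S, EmulatesFor 𝒰 S F s₀ r₁ ∧ EmulatesFor 𝒰 S F (𝒰.inv s₀) r₂

/-- An `F`-tangle of `S`: a consistent orientation including no member of `F`. -/
def FTangle (𝒰 : SepUniverse U) (S : Set U) (F : Set (Set U)) (O : Set U) : Prop :=
  IsOrientation 𝒰 S O ∧ Consistent 𝒰 O ∧ ∀ σ ∈ F, ¬ σ ⊆ O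

/-- `F` is standard for `S`: it forces all trivial separations of `S`. -/
def StandardFor (𝒰 : SepUniverse U) (S : Set U) (F : Set (Set U)) : Prop :=
  ∀ r ∈ S, IsTrivialIn 𝒰 S r → ({𝒰.inv r} : Set U) ∈ F

/-- An `S`-tree: a finite tree together with edge labels in `S` commuting with
the involution. -/
structure STree (𝒰 : SepUniverse U) (S : Set U) where
  V : Type
  fintypeV : Fintype V
  G : SimpleGraph V
  isTree : G.IsTree
  label : V → V → U
  label_mem : ∀ x y, G.Adj x y → label x y ∈ S
  label_inv : ∀ x y, G.Adj x y → label y x = 𝒰.inv (label x y)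

namespace STree

variable {𝒰 : SepUniverse U} {S : Set U}

/-- The star `α(t)` associated with a node `t`. -/
def nodeStar (T : STree 𝒰 S) (t : T.V) : Set U :=
  {u | ∃ s, T.G.Adj s t ∧ T.label s t = u}

/-- The `S`-tree is over `F`. -/
def Over (T : STree 𝒰 S) (F : Set (Set U)) : Prop :=
  ∀ t : T.V, T.nodeStar t ∈ F

/-- Irredundance of an `S`-tree. -/
def Irredundant (T : STree 𝒰 S) : Prop :=
  ∀ t t' t'' : T.V, T.G.Adj t' t → T.G.Adj t'' t → t' ≠ t'' →
    T.label t' t ≠ T.label t'' t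

/-- The set of edge labels of the tree. -/
def labels (T : STree 𝒰 S) : Set U :=
  {u | ∃ x y, T.G.Adj x y ∧ T.label x y = u}

/-- `t` is a sink of the orientation of the tree induced by `P`. -/
def IsSinkOf (T : STree 𝒰 S) (P : Set U) (t : T.V) : Prop :=
  ∀ s, T.G.Adj s t → T.label s t ∈ P

/-- The degree of a node. -/
noncomputable def deg (T : STree 𝒰 S) (t : T.V) : ℕ :=
  (T.G.neighborSet t).ncard

/-- The maximum degree of the tree. -/
noncomputable def maxDeg (T : STree 𝒰 S) : ℕ :=
  sSup {n | ∃ t : T.V, T.deg t = n}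

end STree

/-- A tree of tangles for `S`: an irredundant `S`-tree whose edge labels
distinguish every two distinct regular profiles of `S`. -/
def TreeOfTangles (𝒰 : SepUniverse U) (S : Set U) (T : STree 𝒰 S) : Prop :=
  T.Irredundant ∧
    ∀ P Q : Set U, IsProfile 𝒰 S P → Regular 𝒰 P → IsProfile 𝒰 S Q → Regular 𝒰 Q →
      P ≠ Q → ∃ s ∈ T.labels, Distinguishes 𝒰 s P Q

/-- `δ(P)`: the minimum size of a subset of `P` distinguishing `P` from every
other regular profile of `S`. -/
noncomputable def deltaP (𝒰 : SepUniverse U) (S P : Set U) : ℕ :=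
  sInf {n | ∃ D : Set U, D ⊆ P ∧ D.ncard = n ∧
    ∀ Q : Set U, IsProfile 𝒰 S Q → Regular 𝒰 Q → Q ≠ P →
      ∃ s ∈ D, Distinguishes 𝒰 s P Q}

/-- `S_k`: the separations of order less than `k`. -/
def Sk (𝒱 : SubmodUniverse U) (k : ℕ) : Set U := {s | 𝒱.ord s < k}

/-- `s` distinguishes `P` and `Q` efficiently. -/
def EffDistinguishes (𝒱 : SubmodUniverse U) (s : U) (P Q : Set U) : Prop :=
  Distinguishes 𝒱.toSepUniverse s P Q ∧
    ∀ t : U, Distinguishes 𝒱.toSepUniverse t P Q → 𝒱.ord s ≤ 𝒱.ord t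

/-- Property `Eff(P)` of a star `σ`. -/
def EffProp (𝒱 : SubmodUniverse U) (σ P : Set U) : Prop :=
  ¬ ∃ s ∈ σ, ∃ s' ∈ P, s ≤ s' ∧ 𝒱.ord s' < 𝒱.ord s

/-- `s` is a splice for `r`. -/
def SpliceFor (𝒱 : SubmodUniverse U) (s r : U) : Prop :=
  r ≤ s ∧ ¬ ∃ t : U, r ≤ t ∧ t ≤ s ∧ 𝒱.ord t < 𝒱.ord s

/-- `s` is a splice between `r₁` and `r₂`. -/
def SpliceBetween (𝒱 : SubmodUniverse U) (s r₁ r₂ : U) : Prop :=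
  r₁ ≤ s ∧ s ≤ r₂ ∧ ∀ t : U, r₁ ≤ t → t ≤ r₂ → 𝒱.ord s ≤ 𝒱.ord t

/-- The set `F_e` of stars in `S_k` included in at most one profile of `𝔓` and
satisfying `Eff(P)` whenever included in `P ∈ 𝔓`. -/
def Fe (𝒱 : SubmodUniverse U) (k : ℕ) (𝔓 : Set (Set U)) : Set (Set U) :=
  {σ | σ ⊆ Sk 𝒱 k ∧ IsStar 𝒱.toSepUniverse σ ∧
    (∀ P ∈ 𝔓, ∀ Q ∈ 𝔓, σ ⊆ P → σ ⊆ Q → P = Q) ∧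
    (∀ P ∈ 𝔓, σ ⊆ P → EffProp 𝒱 σ P)}

/-- `δ_e(P)`: the minimum size of a star `σ ⊆ P` with `Eff(P)` such that every
other regular profile of `S_k` contains the inverse of some element of `σ`. -/
noncomputable def deltaE (𝒱 : SubmodUniverse U) (k : ℕ) (P : Set U) : ℕ :=
  sInf {n | ∃ σ : Set U, σ ⊆ P ∧ IsStar 𝒱.toSepUniverse σ ∧ EffProp 𝒱 σ P ∧
    σ.ncard = n ∧
    ∀ Q : Set U, IsProfile 𝒱.toSepUniverse (Sk 𝒱 k) Q → Regular 𝒱.toSepUniverse Q →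
      Q ≠ P → ∃ s ∈ σ, 𝒱.inv s ∈ Q}

/-- `δ_{e,max}`: maximum of `δ_e` over all regular profiles of `S_k`. -/
noncomputable def deltaEMax (𝒱 : SubmodUniverse U) (k : ℕ) : ℕ :=
  sSup {n | ∃ P : Set U, IsProfile 𝒱.toSepUniverse (Sk 𝒱 k) P ∧
    Regular 𝒱.toSepUniverse P ∧ deltaE 𝒱 k P = n}

/-- `P` is a profile in `U`: a `k`-profile for some `k`. -/
def ProfileIn (𝒱 : SubmodUniverse U) (P : Set U) : Prop :=
  ∃ k : ℕ, IsProfile 𝒱.toSepUniverse (Sk 𝒱 k) P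

/-- Strong robustness of a profile. -/
def StronglyRobust (𝒱 : SubmodUniverse U) (P : Set U) : Prop :=
  ∀ s ∈ P, ∀ r : U, 𝒱.ord (s ⊔ r) ≤ 𝒱.ord s → 𝒱.ord (s ⊔ 𝒱.inv r) ≤ 𝒱.ord s →
    (s ⊔ r ∈ P ∨ s ⊔ 𝒱.inv r ∈ P)

/-- `O` weakly orients a separation as `s'` if `s' ≤ r` for some `r ∈ O`. -/
def WeaklyOrientsAs (O : Set U) (s' : U) : Prop :=
  ∃ r ∈ O, s' ≤ r

/-- `O` weakly orients `s` (as `s` or as `s*`). -/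
def WeaklyOrients (𝒰 : SepUniverse U) (O : Set U) (s : U) : Prop :=
  WeaklyOrientsAs O s ∨ WeaklyOrientsAs O (𝒰.inv s)

/-- The set `F_d` of stars, relative to the set of profiles `𝔓`. -/
def Fd (𝒱 : SubmodUniverse U) (𝔓 : Set (Set U)) : Set (Set U) :=
  {σ | IsStar 𝒱.toSepUniverse σ ∧
    (∀ P ∈ 𝔓, ∀ Q ∈ 𝔓, σ ⊆ P → σ ⊆ Q → P = Q) ∧
    (∀ P ∈ 𝔓, ¬ σ ⊆ P → ∃ s ∈ σ, WeaklyOrientsAs P (𝒱.inv s)) ∧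
    (∀ P ∈ 𝔓, σ ⊆ P → EffProp 𝒱 σ P)}

attribute [simp] SepUniverse.inv_inv

section Separations

variable {𝒰 : SepUniverse U} {S P Q N : Set U} {r s t u x y c : U}

namespace SepUniverse

@[simp]
lemma inv_le_inv_iff : 𝒰.inv r ≤ 𝒰.inv s ↔ s ≤ r := (𝒰.le_iff s r).symm

lemma le_inv_comm : r ≤ 𝒰.inv s ↔ s ≤ 𝒰.inv r := by
  rw [← inv_le_inv_iff, 𝒰.inv_inv]

lemma inv_le_comm : 𝒰.inv r ≤ s ↔ 𝒰.inv s ≤ r := by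
  rw [← inv_le_inv_iff, 𝒰.inv_inv]

def invIso (𝒰 : SepUniverse U) : U ≃o Uᵒᵈ where
  toFun r := OrderDual.toDual (𝒰.inv r)
  invFun r := 𝒰.inv (OrderDual.ofDual r)
  left_inv := 𝒰.inv_inv
  right_inv := 𝒰.inv_inv
  map_rel_iff' := inv_le_inv_iff

lemma inv_sup (𝒰 : SepUniverse U) (r s : U) : 𝒰.inv (r ⊔ s) = 𝒰.inv r ⊓ 𝒰.inv s :=
  𝒰.invIso.map_sup r s

lemma inv_inf (𝒰 : SepUniverse U) (r s : U) : 𝒰.inv (r ⊓ s) = 𝒰.inv r ⊔ 𝒰.inv s :=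
  𝒰.invIso.map_inf r s

lemma pair_inv_eq (𝒰 : SepUniverse U) (s : U) :
    ({𝒰.inv s, 𝒰.inv (𝒰.inv s)} : Set U) = {s, 𝒰.inv s} := by
  rw [𝒰.inv_inv, Set.pair_comm]

end SepUniverse

open SepUniverse

lemma nested_of_le (h : r ≤ s) : Nested 𝒰 r s := .inl h

lemma Nested.symm (h : Nested 𝒰 r s) : Nested 𝒰 s r := by
  rcases h with h | h | h | h
  · exact .inr (.inr (.inr (inv_le_inv_iff.2 h)))
  · exact .inr (.inl (le_inv_comm.1 h))
  · exact .inr (.inr (.inl (inv_le_comm.1 h)))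
  · exact .inl (inv_le_inv_iff.1 h)

lemma nested_comm : Nested 𝒰 r s ↔ Nested 𝒰 s r := ⟨.symm, .symm⟩

@[simp]
lemma nested_inv_right : Nested 𝒰 r (𝒰.inv s) ↔ Nested 𝒰 r s := by
  simp only [Nested, 𝒰.inv_inv]
  tauto

lemma nested_iff_of_mem_pair (hx : x ∈ ({s, 𝒰.inv s} : Set U)) :
    Nested 𝒰 u x ↔ Nested 𝒰 u s := by
  rcases hx with rfl | rfl <;> simp

lemma NestedSet.insert (hN : NestedSet 𝒰 N) (hs : ∀ u ∈ N, Nested 𝒰 u s) :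
    NestedSet 𝒰 (insert s N) := by
  rintro r (rfl | hr) u (rfl | hu)
  · exact nested_of_le le_rfl
  · exact (hs u hu).symm
  · exact hs r hr
  · exact hN r hr u hu

lemma nested_sup_of_not_nested (hst : ¬ Nested 𝒰 s t) (hs : Nested 𝒰 u s)
    (ht : Nested 𝒰 u t) : Nested 𝒰 u (s ⊔ t) := by
  rcases hs with h | h | h | h
  · exact .inl (h.trans le_sup_left)
  · rcases ht with h' | h' | h' | h'
    · exact .inl (h'.trans le_sup_right)
    · exact .inr (.inl (by rw [𝒰.inv_sup]; exact le_inf h h'))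
    · exact .inr (.inr (.inl (h'.trans le_sup_right)))
    · exact absurd (.inr (.inl (le_inv_comm.1 ((inv_le_inv_iff.1 h').trans h)))) hst
  · exact .inr (.inr (.inl (h.trans le_sup_left)))
  · rcases ht with h' | h' | h' | h'
    · exact .inl (h'.trans le_sup_right)
    · exact absurd (.inr (.inl ((inv_le_inv_iff.1 h).trans h'))) hst
    · exact .inr (.inr (.inl (h'.trans le_sup_right)))
    · exact .inr (.inr (.inr (by rw [𝒰.inv_sup]; exact le_inf h h')))

def IsCorner (𝒰 : SepUniverse U) (c s t : U) : Prop :=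
  ∃ x ∈ ({s, 𝒰.inv s} : Set U), ∃ y ∈ ({t, 𝒰.inv t} : Set U), c = x ⊔ y

lemma IsCorner.of_inv_left (h : IsCorner 𝒰 c (𝒰.inv s) t) : IsCorner 𝒰 c s t := by
  rwa [IsCorner, 𝒰.pair_inv_eq] at h

lemma IsCorner.of_inv_right (h : IsCorner 𝒰 c s (𝒰.inv t)) : IsCorner 𝒰 c s t := by
  rwa [IsCorner, 𝒰.pair_inv_eq] at h

lemma IsCorner.nested_right (h : IsCorner 𝒰 c s t) : Nested 𝒰 c t := by
  obtain ⟨x, -, y, hy, rfl⟩ := h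
  exact (nested_iff_of_mem_pair hy).1 (nested_of_le le_sup_right).symm

lemma IsCorner.nested_of_not_nested (h : IsCorner 𝒰 c s t) (hst : ¬ Nested 𝒰 s t)
    (hs : Nested 𝒰 u s) (ht : Nested 𝒰 u t) : Nested 𝒰 u c := by
  obtain ⟨x, hx, y, hy, rfl⟩ := h
  refine nested_sup_of_not_nested ?_ ((nested_iff_of_mem_pair hx).2 hs)
    ((nested_iff_of_mem_pair hy).2 ht)
  rwa [nested_iff_of_mem_pair hy, nested_comm, nested_iff_of_mem_pair hx, nested_comm]

lemma Distinguishes.symm (h : Distinguishes 𝒰 s P Q) : Distinguishes 𝒰 s Q P :=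
  (Or.symm h).imp And.symm And.symm

lemma Distinguishes.inv (h : Distinguishes 𝒰 s P Q) : Distinguishes 𝒰 (𝒰.inv s) P Q := by
  rw [Distinguishes, 𝒰.inv_inv]
  exact Or.symm h

lemma Distinguishes.mem (hS : SepSystem 𝒰 S) (hP : P ⊆ S) (h : Distinguishes 𝒰 s P Q) :
    s ∈ S := by
  rcases h with ⟨h, -⟩ | ⟨h, -⟩
  · exact hP h
  · simpa using hS _ (hP h)

lemma IsOrientation.mem_or_inv_mem (hP : IsOrientation 𝒰 S P) (hs : s ∈ S) :
    s ∈ P ∨ 𝒰.inv s ∈ P :=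
  (hP.2 s hs).1

lemma IsOrientation.exists_distinguishes (hP : IsOrientation 𝒰 S P)
    (hQ : IsOrientation 𝒰 S Q) (hne : P ≠ Q) : ∃ s, Distinguishes 𝒰 s P Q := by
  by_contra! h
  refine hne (Set.ext fun s => ⟨fun hs => ?_, fun hs => ?_⟩)
  · exact (hQ.mem_or_inv_mem (hP.1 hs)).resolve_right fun hs' => h s (.inl ⟨hs, hs'⟩)
  · exact (hP.mem_or_inv_mem (hQ.1 hs)).resolve_right fun hs' => h s (.inr ⟨hs', hs⟩)

lemma IsProfile.sup_mem (hP : IsProfile 𝒰 S P) (hx : x ∈ P) (hy : y ∈ P) (hxy : x ⊔ y ∈ S) :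
    x ⊔ y ∈ P :=
  (hP.1.mem_or_inv_mem hxy).resolve_right (hP.2.2 x hx y hy)

def IsRegularProfile (𝒰 : SepUniverse U) (S P : Set U) : Prop :=
  IsProfile 𝒰 S P ∧ Regular 𝒰 P

lemma IsRegularProfile.mem_of_le (hP : IsRegularProfile 𝒰 S P) (hx : x ∈ S) (hy : y ∈ P)
    (hxy : x ≤ y) : x ∈ P := by
  rcases hP.1.1.mem_or_inv_mem hx with hx' | hx'
  · exact hx'
  by_cases hxy' : ({𝒰.inv x, 𝒰.inv (𝒰.inv x)} : Set U) = {y, 𝒰.inv y}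
  · have : x ∈ ({y, 𝒰.inv y} : Set U) := hxy' ▸ by simp
    rcases this with rfl | rfl
    · exact hy
    · exact absurd hxy (hP.2 y hy)
  · exact absurd (by rwa [𝒰.inv_inv]) (hP.1.2.1 _ hx' _ hy hxy')

lemma distinguishes_sup (hS : SepSystem 𝒰 S) (hP : IsProfile 𝒰 S P)
    (hQ : IsRegularProfile 𝒰 S Q) (hx : x ∈ P) (hxQ : 𝒰.inv x ∈ Q) (hy : y ∈ P)
    (hxy : x ⊔ y ∈ S) : Distinguishes 𝒰 (x ⊔ y) P Q :=
  .inl ⟨hP.sup_mem hx hy hxy, hQ.mem_of_le (hS _ hxy) hxQ (inv_le_inv_iff.2 le_sup_left)⟩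

end Separations

section Submodular

variable {𝒱 : SubmodUniverse U} {k : ℕ} {𝔓 : Set (Set U)} {P Q P' Q' N : Set U} {s t c x : U}

lemma sepSystem_Sk : SepSystem 𝒱.toSepUniverse (Sk 𝒱 k) := fun s hs => by
  simpa [Sk, 𝒱.ord_inv] using hs

lemma SubmodUniverse.ord_sup_add_ord_inv_sup_le (𝒱 : SubmodUniverse U) (s t : U) :
    𝒱.ord (s ⊔ t) + 𝒱.ord (𝒱.inv s ⊔ 𝒱.inv t) ≤ 𝒱.ord s + 𝒱.ord t := by
  have := 𝒱.submod s t
  rwa [← 𝒱.ord_inv (s ⊓ t), 𝒱.inv_inf] at this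

lemma EffDistinguishes.symm (h : EffDistinguishes 𝒱 s P Q) : EffDistinguishes 𝒱 s Q P :=
  ⟨h.1.symm, fun t ht => h.2 t ht.symm⟩

lemma EffDistinguishes.inv (h : EffDistinguishes 𝒱 s P Q) :
    EffDistinguishes 𝒱 (𝒱.inv s) P Q :=
  ⟨h.1.inv, fun t ht => 𝒱.ord_inv s ▸ h.2 t ht⟩

lemma EffDistinguishes.of_ord_le (h : EffDistinguishes 𝒱 s P Q)
    (hc : Distinguishes 𝒱.toSepUniverse c P Q) (hcs : 𝒱.ord c ≤ 𝒱.ord s) :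
    EffDistinguishes 𝒱 c P Q :=
  ⟨hc, fun t ht => hcs.trans (h.2 t ht)⟩

lemma exists_effDistinguishes (h : ∃ s, Distinguishes 𝒱.toSepUniverse s P Q) :
    ∃ s, EffDistinguishes 𝒱 s P Q := by
  obtain ⟨s, hs, hmin⟩ := Set.exists_min_image {s | Distinguishes 𝒱.toSepUniverse s P Q}
    𝒱.ord (Set.toFinite _) h
  exact ⟨s, hs, hmin⟩

lemma EffDistinguishes.ord_le_ord_sup (hP : IsProfile 𝒱.toSepUniverse (Sk 𝒱 k) P)
    (hQ : IsRegularProfile 𝒱.toSepUniverse (Sk 𝒱 k) Q) (ht : EffDistinguishes 𝒱 t P Q)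
    (htP : t ∈ P) (htQ : 𝒱.inv t ∈ Q) (hx : x ∈ P) : 𝒱.ord t ≤ 𝒱.ord (x ⊔ t) := by
  by_contra! hlt
  have hk : t ⊔ x ∈ Sk 𝒱 k := (sup_comm t x ▸ hlt).trans (hP.1.1 htP)
  have := ht.2 _ (distinguishes_sup sepSystem_Sk hP hQ htP htQ hx hk)
  rw [sup_comm] at this
  omega

/-- If no corner had order at most `|s|`, submodularity would produce a corner of order less
than `|t|` distinguishing `P'` and `Q'`. -/
lemma exists_corner_distinguishes_of_mem
    (hP : IsRegularProfile 𝒱.toSepUniverse (Sk 𝒱 k) P)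
    (hQ : IsRegularProfile 𝒱.toSepUniverse (Sk 𝒱 k) Q)
    (hP' : IsRegularProfile 𝒱.toSepUniverse (Sk 𝒱 k) P')
    (hQ' : IsRegularProfile 𝒱.toSepUniverse (Sk 𝒱 k) Q')
    (hsP : s ∈ P) (hsQ : 𝒱.inv s ∈ Q) (htP : t ∈ P)
    (ht : EffDistinguishes 𝒱 t P' Q') (htP' : t ∈ P') (htQ' : 𝒱.inv t ∈ Q') :
    ∃ c, IsCorner 𝒱.toSepUniverse c s t ∧ Distinguishes 𝒱.toSepUniverse c P Q ∧
      𝒱.ord c ≤ 𝒱.ord s := by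
  have hs : s ∈ Sk 𝒱 k := hP.1.1.1 hsP
  have hsinv : 𝒱.inv (𝒱.inv s) ∈ P := by rwa [𝒱.inv_inv]
  have h₁ := 𝒱.ord_sup_add_ord_inv_sup_le s t
  have h₂ := 𝒱.ord_sup_add_ord_inv_sup_le (𝒱.inv s) t
  rw [𝒱.inv_inv, 𝒱.ord_inv] at h₂
  have hti : 𝒱.inv (𝒱.inv t) ∈ P' := by rwa [𝒱.inv_inv]
  have eff_P' : s ∈ P' → 𝒱.ord t ≤ 𝒱.ord (s ⊔ t) :=
    ht.ord_le_ord_sup hP'.1 hQ' htP' htQ'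
  have eff_Q' : ∀ x ∈ Q', 𝒱.ord t ≤ 𝒱.ord (x ⊔ 𝒱.inv t) := fun x hx =>
    𝒱.ord_inv t ▸ ht.inv.symm.ord_le_ord_sup hQ'.1 hP' htQ' hti hx
  have eff_s : 𝒱.inv s ∈ P' → s ∈ Q' → 𝒱.ord t ≤ 𝒱.ord s := fun h h' =>
    ht.2 s (.inr ⟨h, h'⟩)
  by_cases hA : 𝒱.ord (s ⊔ t) ≤ 𝒱.ord s
  · exact ⟨s ⊔ t, ⟨s, by simp, t, by simp, rfl⟩,
      distinguishes_sup sepSystem_Sk hP.1 hQ hsP hsQ htP (hA.trans_lt hs), hA⟩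
  rcases hQ.1.1.mem_or_inv_mem (hP.1.1.1 htP) with htQ | htQ
  · by_cases hC : 𝒱.ord (𝒱.inv s ⊔ t) ≤ 𝒱.ord s
    · exact ⟨_, ⟨𝒱.inv s, by simp, t, by simp, rfl⟩,
        (distinguishes_sup sepSystem_Sk hQ.1 hP hsQ hsinv htQ (hC.trans_lt hs)).symm, hC⟩
    rcases hQ'.1.1.mem_or_inv_mem hs with h | h
    · have := eff_Q' s h
      omega
    · have := eff_Q' _ h
      omega
  · by_cases hB : 𝒱.ord (𝒱.inv s ⊔ 𝒱.inv t) ≤ 𝒱.ord s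
    · exact ⟨_, ⟨𝒱.inv s, by simp, 𝒱.inv t, by simp, rfl⟩,
        (distinguishes_sup sepSystem_Sk hQ.1 hP hsQ hsinv htQ (hB.trans_lt hs)).symm, hB⟩
    rcases hP'.1.1.mem_or_inv_mem hs with h | h
    · have := eff_P' h
      omega
    rcases hQ'.1.1.mem_or_inv_mem hs with h' | h'
    · have := eff_s h h'
      omega
    · have := eff_Q' _ h'
      omega

lemma exists_corner_distinguishes
    (hP : IsRegularProfile 𝒱.toSepUniverse (Sk 𝒱 k) P)
    (hQ : IsRegularProfile 𝒱.toSepUniverse (Sk 𝒱 k) Q)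
    (hP' : IsRegularProfile 𝒱.toSepUniverse (Sk 𝒱 k) P')
    (hQ' : IsRegularProfile 𝒱.toSepUniverse (Sk 𝒱 k) Q')
    (hs : Distinguishes 𝒱.toSepUniverse s P Q) (ht : EffDistinguishes 𝒱 t P' Q') :
    ∃ c, IsCorner 𝒱.toSepUniverse c s t ∧ Distinguishes 𝒱.toSepUniverse c P Q ∧
      𝒱.ord c ≤ 𝒱.ord s := by
  wlog hsPQ : s ∈ P ∧ 𝒱.inv s ∈ Q generalizing s
  · obtain ⟨c, hc, hcPQ, hcs⟩ := this hs.inv (by simpa using hs.resolve_left hsPQ)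
    exact ⟨c, hc.of_inv_left, hcPQ, by rwa [𝒱.ord_inv] at hcs⟩
  wlog htPQ' : t ∈ P' ∧ 𝒱.inv t ∈ Q' generalizing P' Q'
  · exact this hQ' hP' ht.symm (ht.1.resolve_left htPQ').symm
  wlog htP : t ∈ P generalizing t P' Q'
  · have htP : 𝒱.inv t ∈ P := (hP.1.1.mem_or_inv_mem (hP'.1.1.1 htPQ'.1)).resolve_left htP
    obtain ⟨c, hc, h⟩ := this hQ' hP' ht.inv.symm ⟨htPQ'.2, by simpa using htPQ'.1⟩ htP
    exact ⟨c, hc.of_inv_right, h⟩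
  exact exists_corner_distinguishes_of_mem hP hQ hP' hQ' hsPQ.1 hsPQ.2 htP ht htPQ'.1 htPQ'.2

def effDistinguishers (𝒱 : SubmodUniverse U) (𝔓 : Set (Set U)) : Set U :=
  {t | ∃ P ∈ 𝔓, ∃ Q ∈ 𝔓, EffDistinguishes 𝒱 t P Q}

lemma exists_effDistinguishes_forall_nested
    (h𝔓 : ∀ P ∈ 𝔓, IsRegularProfile 𝒱.toSepUniverse (Sk 𝒱 k) P)
    (hND : N ⊆ effDistinguishers 𝒱 𝔓) (hN : NestedSet 𝒱.toSepUniverse N)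
    (hP : IsRegularProfile 𝒱.toSepUniverse (Sk 𝒱 k) P)
    (hQ : IsRegularProfile 𝒱.toSepUniverse (Sk 𝒱 k) Q) (hne : P ≠ Q) :
    ∃ s, EffDistinguishes 𝒱 s P Q ∧ ∀ u ∈ N, Nested 𝒱.toSepUniverse u s := by
  let crossing : U → Set U := fun s => {u ∈ N | ¬ Nested 𝒱.toSepUniverse u s}
  obtain ⟨s, hs, hmin⟩ := Set.exists_min_image {s | EffDistinguishes 𝒱 s P Q}
    (fun s => (crossing s).ncard) (Set.toFinite _)
    (exists_effDistinguishes (hP.1.1.exists_distinguishes hQ.1.1 hne))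
  refine ⟨s, hs, fun t ht => by_contra fun hts => ?_⟩
  obtain ⟨P', hP', Q', hQ', htPQ'⟩ := hND ht
  obtain ⟨c, hc, hcPQ, hcs⟩ :=
    exists_corner_distinguishes hP hQ (h𝔓 P' hP') (h𝔓 Q' hQ') hs.1 htPQ'
  have hsub : crossing c ⊂ crossing s := by
    have hmono : crossing c ⊆ crossing s := fun u hu =>
      ⟨hu.1, fun hus => hu.2 (hc.nested_of_not_nested (fun hst => hts hst.symm) hus
        (hN u hu.1 t ht))⟩
    exact (Set.ssubset_iff_of_subset hmono).2
      ⟨t, ⟨ht, hts⟩, fun htc => htc.2 hc.nested_right.symm⟩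
  exact (Set.ncard_lt_ncard hsub).not_ge (hmin c (hs.of_ord_le hcPQ hcs))

end Submodular

/-- For a set `𝔓` of regular profiles of `S_k` in a submodular
universe there is a nested set `N ⊆ S_k` efficiently distinguishing all the
profiles in `𝔓`. -/
theorem efficient_tree_of_tangles (𝒱 : SubmodUniverse U) (k : ℕ)
    (𝔓 : Set (Set U))
    (h𝔓 : ∀ P ∈ 𝔓, IsProfile 𝒱.toSepUniverse (Sk 𝒱 k) P ∧ Regular 𝒱.toSepUniverse P) :
    ∃ N : Set U, N ⊆ Sk 𝒱 k ∧ NestedSet 𝒱.toSepUniverse N ∧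
      ∀ P ∈ 𝔓, ∀ Q ∈ 𝔓, P ≠ Q → ∃ s ∈ N, EffDistinguishes 𝒱 s P Q := by
  obtain ⟨N, hN⟩ := Set.Finite.exists_maximal
    (s := {N : Set U | N ⊆ effDistinguishers 𝒱 𝔓 ∧ NestedSet 𝒱.toSepUniverse N})
    (Set.toFinite _) ⟨∅, Set.empty_subset _, fun r hr => hr.elim⟩
  refine ⟨N, fun t ht => ?_, hN.1.2, fun P hP Q hQ hne => ?_⟩
  · obtain ⟨P, hP, Q, -, htPQ⟩ := hN.1.1 ht
    exact htPQ.1.mem sepSystem_Sk (h𝔓 P hP).1.1.1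
  · obtain ⟨s, hs, hsN⟩ := exists_effDistinguishes_forall_nested h𝔓 hN.1.1 hN.1.2
      (h𝔓 P hP) (h𝔓 Q hQ) hne
    exact ⟨s, hN.mem_of_prop_insert
      ⟨Set.insert_subset ⟨P, hP, Q, hQ, hs⟩ hN.1.1, hN.1.2.insert hsN⟩, hs⟩

end SepDemo
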